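/- Let σ > 0 and let r be a random variable whose law is the Gaussian measure on ℝ with mean 0 and variance σ². Then the pushforward of the law of r under the map x ↦ log(x²) has density t ↦ f(t − log σ²) with respect to Lebesgue measure, where f is the log-χ²₁ density. In particular, writing η = log σ², the variable z = log r² has density t ↦ f(t − η). -/

import Mathlib

open MeasureTheory ProbabilityTheory Real
open scoped NNReal ENNReal

/-!
Off the Lebesgue-null point `0`, the map `x ↦ log x²` is two-to-one with inverse branches
`t ↦ ±e^{t/2}`, both of Jacobian `e^{t/2}/2`. Hence it sends a density `g` to
`t ↦ (e^{t/2}/2) (g(e^{t/2}) + g(-e^{t/2}))`, which for the `N(0, v)` density is `f(t - log v)`.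
-/

noncomputable def logChiSqPDFReal (t : ℝ) : ℝ :=
  1 / √(2 * π) * exp ((t - exp t) / 2)

lemma exp_half_log_sq {x : ℝ} (hx : x ≠ 0) : exp (log (x ^ 2) / 2) = |x| := by
  rw [exp_half, exp_log (by positivity), sqrt_sq_eq_abs]

lemma exp_half_sq (t : ℝ) : exp (t / 2) ^ 2 = exp t := by
  rw [exp_half, sq_sqrt (exp_pos t).le]

lemma preimage_log_sq_sdiff_zero (s : Set ℝ) :
    (fun x : ℝ => log (x ^ 2)) ⁻¹' s \ {0} =
      (fun t => exp (t / 2)) '' s ∪ (fun t => -exp (t / 2)) '' s := by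
  ext x
  constructor
  · rintro ⟨hxs, hx0 : x ≠ 0⟩
    rcases abs_choice x with hx | hx
    · exact Or.inl ⟨_, hxs, show exp (log (x ^ 2) / 2) = x by rw [exp_half_log_sq hx0, hx]⟩
    · exact Or.inr ⟨_, hxs,
        show -exp (log (x ^ 2) / 2) = x by rw [exp_half_log_sq hx0, hx, neg_neg]⟩
  · rintro (⟨t, ht, rfl⟩ | ⟨t, ht, rfl⟩)
    · exact ⟨by simpa only [Set.mem_preimage, exp_half_sq, log_exp], (exp_pos _).ne'⟩
    · exact ⟨by simpa only [Set.mem_preimage, neg_sq, exp_half_sq, log_exp],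
        neg_ne_zero.mpr (exp_pos _).ne'⟩

lemma hasDerivAt_exp_half (t : ℝ) : HasDerivAt (fun t => exp (t / 2)) (exp (t / 2) / 2) t := by
  simpa [div_eq_mul_inv] using ((hasDerivAt_id t).div_const 2).exp

lemma exp_half_injective : Function.Injective fun t : ℝ => exp (t / 2) := fun a b h => by
  simpa using exp_injective h

lemma map_log_sq_withDensity {g : ℝ → ℝ≥0∞} (hg : Measurable g) :
    (volume.withDensity g).map (fun x => log (x ^ 2)) =
      volume.withDensity fun t =>
        ENNReal.ofReal (exp (t / 2) / 2) * (g (exp (t / 2)) + g (-exp (t / 2))) := by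
  ext s hs
  have hinj_neg : Function.Injective fun t : ℝ => -exp (t / 2) :=
    neg_injective.comp exp_half_injective
  have hdisj : Disjoint ((fun t => exp (t / 2)) '' s) ((fun t => -exp (t / 2)) '' s) := by
    rw [Set.disjoint_left]
    rintro _ ⟨t, -, rfl⟩ ⟨u, -, hu⟩
    linarith [exp_pos (t / 2), exp_pos (u / 2)]
  have hmeas_neg : MeasurableSet ((fun t => -exp (t / 2)) '' s) :=
    ((by fun_prop : Continuous fun t : ℝ => -exp (t / 2)).measurableEmbedding
      hinj_neg).measurableSet_image' hs
  rw [Measure.map_apply (by fun_prop) hs, withDensity_apply _ hs,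
    withDensity_apply _ (measurableSet_preimage (by fun_prop) hs),
    ← setLIntegral_congr (sdiff_ae_eq_self.mpr
      (measure_mono_null Set.inter_subset_right volume_singleton)),
    preimage_log_sq_sdiff_zero, lintegral_union hmeas_neg hdisj,
    lintegral_image_eq_lintegral_abs_deriv_mul hs
      (fun t _ => (hasDerivAt_exp_half t).hasDerivWithinAt) exp_half_injective.injOn,
    lintegral_image_eq_lintegral_abs_deriv_mul (f := fun t => -exp (t / 2)) hs
      (fun t _ => (hasDerivAt_exp_half t).neg.hasDerivWithinAt) hinj_neg.injOn,
    ← lintegral_add_left (by fun_prop)]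
  simp only [abs_neg, abs_of_pos (half_pos (exp_pos _)), mul_add]

lemma exp_half_mul_gaussianPDFReal_add_neg {v : ℝ≥0} (hv : v ≠ 0) (t : ℝ) :
    exp (t / 2) / 2 * (gaussianPDFReal 0 v (exp (t / 2)) + gaussianPDFReal 0 v (-exp (t / 2))) =
      logChiSqPDFReal (t - log v) := by
  have hv0 : (0 : ℝ) < v := by positivity
  have hsqrt : √(2 * π * v) = √(2 * π) * exp (log v / 2) := by
    rw [sqrt_mul (by positivity), exp_half, exp_log hv0]
  simp only [gaussianPDFReal, logChiSqPDFReal, sub_zero, neg_sq, exp_half_sq, hsqrt]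
  rw [exp_sub t, exp_log hv0,
    show (t - log v - exp t / v) / 2 = t / 2 - log v / 2 + -exp t / (2 * v) by field_simp; ring,
    exp_add, exp_sub]
  field_simp
  ring

lemma gaussianReal_map_log_sq {v : ℝ≥0} (hv : v ≠ 0) :
    (gaussianReal 0 v).map (fun x => log (x ^ 2)) =
      volume.withDensity fun t => ENNReal.ofReal (logChiSqPDFReal (t - log v)) := by
  rw [gaussianReal_of_var_ne_zero 0 hv, map_log_sq_withDensity (measurable_gaussianPDF 0 v)]
  congr with t
  rw [gaussianPDF, gaussianPDF, ← ENNReal.ofReal_add (gaussianPDFReal_nonneg _ _ _)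
    (gaussianPDFReal_nonneg _ _ _), ← ENNReal.ofReal_mul (by positivity),
    exp_half_mul_gaussianPDFReal_add_neg hv]

theorem logChiSq_density_of_gaussian_scaled_general
    {Ω : Type*} [MeasurableSpace Ω] (P : Measure Ω)
    (σ : ℝ≥0) (hσ : 0 < σ) (r : Ω → ℝ) (hr : Measurable r)
    (hlaw : P.map r = gaussianReal 0 (σ ^ 2)) :
    P.map (fun ω => Real.log ((r ω) ^ 2)) =
      volume.withDensity
        (fun t => ENNReal.ofReal
          ((1 / Real.sqrt (2 * Real.pi)) *
            Real.exp (((t - Real.log ((σ : ℝ) ^ 2))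
              - Real.exp (t - Real.log ((σ : ℝ) ^ 2))) / 2))) := by
  rw [show (fun ω => log (r ω ^ 2)) = (fun x => log (x ^ 2)) ∘ r from rfl,
    ← Measure.map_map (by fun_prop) hr, hlaw, gaussianReal_map_log_sq (pow_ne_zero 2 hσ.ne')]
  push_cast
  rfl

/-- If `r` has law `N(0, σ²)` with `σ > 0`, then `log r²` has density
`t ↦ f(t − log σ²)` with respect to Lebesgue measure, where
`f(t) = (1/√(2π)) · exp((t − eᵗ)/2)` is the log-χ²₁ density. -/
theorem logChiSq_density_of_gaussian_scaled
    {Ω : Type*} [MeasurableSpace Ω] (P : Measure Ω) [IsProbabilityMeasure P]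
    (σ : ℝ≥0) (hσ : 0 < σ) (r : Ω → ℝ) (hr : Measurable r)
    (hlaw : P.map r = gaussianReal 0 (σ ^ 2)) :
    P.map (fun ω => Real.log ((r ω) ^ 2)) =
      volume.withDensity
        (fun t => ENNReal.ofReal
          ((1 / Real.sqrt (2 * Real.pi)) *
            Real.exp (((t - Real.log ((σ : ℝ) ^ 2))
              - Real.exp (t - Real.log ((σ : ℝ) ^ 2))) / 2))) :=
  logChiSq_density_of_gaussian_scaled_general P σ hσ r hr hlaw
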